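/- Let y_0 < y_1 < ... < y_N be strictly increasing quantization levels contained in [0, 1] (unsigned quantization), let β ∈ [0,1), let Δ > 0 be a scale factor that is unchanged across the update, and let q be an interior index (0 < q < N) whose radius r_q = (1/2)·min(y_q − y_{q−1}, y_{q+1} − y_q) satisfies r_q ≥ 1−β. Then for every signal z with 0 ≤ z ≤ Δ, the quantized state remains unchanged: setting u = (β·y_q·Δ + (1−β)·z)/Δ, one has |u − y_q| ≤ |u − y_k| for every k ∈ {0,...,N}. -/

import Mathlib

/-!
The EMA update moves the dequantized state `y q` towards the normalized signal `z / Δ` by the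
fraction `1 - β`; both lie in `[0, 1]`, so the update moves it by at most `1 - β ≤ r_q`. A point
within `r_q` of `y q` is at most halfway to either neighbouring level, and by monotonicity no other
level is closer.
-/

noncomputable def levelRadius (y : ℕ → ℝ) (q : ℕ) : ℝ :=
  (1 / 2) * min (y q - y (q - 1)) (y (q + 1) - y q)

theorem abs_sub_le_abs_sub_of_abs_sub_le_levelRadius {N : ℕ} {y : ℕ → ℝ}
    (hy : MonotoneOn y (Set.Iic N)) {q k : ℕ} (hqN : q ≤ N) (hkN : k ≤ N) {u : ℝ}
    (hu : |u - y q| ≤ levelRadius y q) : |u - y q| ≤ |u - y k| := by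
  have hleft : levelRadius y q ≤ (1 / 2) * (y q - y (q - 1)) :=
    mul_le_mul_of_nonneg_left (min_le_left _ _) (by norm_num)
  have hright : levelRadius y q ≤ (1 / 2) * (y (q + 1) - y q) :=
    mul_le_mul_of_nonneg_left (min_le_right _ _) (by norm_num)
  obtain ⟨hlo, hhi⟩ := abs_le.mp hu
  rcases lt_trichotomy k q with hkq | rfl | hqk
  · have hyk : y k ≤ y (q - 1) :=
      hy (Set.mem_Iic.mpr hkN) (Set.mem_Iic.mpr (by omega)) (by omega)
    calc |u - y q| ≤ u - y k := by linarith
      _ ≤ |u - y k| := le_abs_self _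
  · exact le_rfl
  · have hyk : y (q + 1) ≤ y k := hy (Set.mem_Iic.mpr (by omega)) (Set.mem_Iic.mpr hkN) hqk
    calc |u - y q| ≤ y k - u := by linarith
      _ ≤ |u - y k| := by rw [abs_sub_comm]; exact le_abs_self _

theorem abs_ema_sub_le {β a t : ℝ} (hβ : β ≤ 1) (ha : a ∈ Set.Icc (0 : ℝ) 1)
    (ht : t ∈ Set.Icc (0 : ℝ) 1) : |β * a + (1 - β) * t - a| ≤ 1 - β := by
  have hta : |t - a| ≤ 1 := abs_le.mpr ⟨by linarith [ha.2, ht.1], by linarith [ha.1, ht.2]⟩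
  calc |β * a + (1 - β) * t - a| = (1 - β) * |t - a| := by
        rw [show β * a + (1 - β) * t - a = (1 - β) * (t - a) by ring, abs_mul,
          abs_of_nonneg (sub_nonneg.mpr hβ)]
    _ ≤ 1 - β := mul_le_of_le_one_right (sub_nonneg.mpr hβ) hta

theorem signal_swamping_fixed_scale_unsigned_general
    (N : ℕ) (y : ℕ → ℝ)
    (hmono : ∀ k, k < N → y k < y (k + 1))
    (hbound : ∀ k, k ≤ N → y k ∈ Set.Icc (0 : ℝ) 1)
    (β : ℝ) (hβ1 : β < 1)
    (Δ : ℝ) (hΔ : 0 < Δ)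
    (q : ℕ) (hqN : q < N)
    (hr : 1 - β ≤ (1 / 2) * min (y q - y (q - 1)) (y (q + 1) - y q)) :
    ∀ z : ℝ, 0 ≤ z → z ≤ Δ →
      ∀ k, k ≤ N →
        |(β * y q * Δ + (1 - β) * z) / Δ - y q|
          ≤ |(β * y q * Δ + (1 - β) * z) / Δ - y k| := by
  intro z hz0 hzΔ k hkN
  have hy : MonotoneOn y (Set.Iic N) := (strictMonoOn_Iic_of_lt_succ hmono).monotoneOn
  have hnormalize : (β * y q * Δ + (1 - β) * z) / Δ = β * y q + (1 - β) * (z / Δ) := by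
    field_simp
  have hsignal : z / Δ ∈ Set.Icc (0 : ℝ) 1 :=
    ⟨div_nonneg hz0 hΔ.le, (div_le_one hΔ).mpr hzΔ⟩
  have hstep := abs_ema_sub_le hβ1.le (hbound q hqN.le) hsignal
  rw [hnormalize]
  exact abs_sub_le_abs_sub_of_abs_sub_le_levelRadius hy hqN.le hkN (hstep.trans hr)

/-- Unsigned version: with levels in `[0,1]`, fixed scale `Δ`, and an interior index `q`
whose radius `r_q = (1/2)·min (y q − y (q−1)) (y (q+1) − y q)` satisfies `r_q ≥ 1−β`,
any signal `z` with `0 ≤ z ≤ Δ` is swamped: the quantized EMA state remains unchanged. -/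
theorem signal_swamping_fixed_scale_unsigned
    (N : ℕ) (y : ℕ → ℝ)
    (hmono : ∀ k, k < N → y k < y (k + 1))
    (hbound : ∀ k, k ≤ N → y k ∈ Set.Icc (0 : ℝ) 1)
    (β : ℝ) (hβ0 : 0 ≤ β) (hβ1 : β < 1)
    (Δ : ℝ) (hΔ : 0 < Δ)
    (q : ℕ) (hq0 : 0 < q) (hqN : q < N)
    (hr : 1 - β ≤ (1 / 2) * min (y q - y (q - 1)) (y (q + 1) - y q)) :
    ∀ z : ℝ, 0 ≤ z → z ≤ Δ →
      ∀ k, k ≤ N →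
        |(β * y q * Δ + (1 - β) * z) / Δ - y q|
          ≤ |(β * y q * Δ + (1 - β) * z) / Δ - y k| :=
  signal_swamping_fixed_scale_unsigned_general N y hmono hbound β hβ1 Δ hΔ q hqN hr
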